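/- Two vertex solutions u and w of a polytope P_{i-1} = O ∩ J ∩ H₁ ∩ ... ∩ H_{i-1} are adjacent (joined by an edge of P_{i-1}) if and only if the dimension of the intersection of H₁ ∩ ... ∩ H_{i-1} with the coordinate subspace {x ∈ R^t : x_k = 0 for all k ∈ Z(u) ∩ Z(w)} is two; equivalently, t - rank(M) = 2 where M is the matrix stacking the rows m₁,...,m_{i-1} and the standard basis rows e_k for k ∈ Z(u) ∩ Z(w). -/

import Mathlib

open Matrix

/-- The matrix stacking the rows `m₁, …, m_{i-1}` (given by `rows`) and the
standard basis rows `e_k` for `k ∈ Z(u) ∩ Z(w)`. -/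
noncomputable def adjacencyTestMatrix {s t : ℕ} (rows : Fin s → (Fin t → ℝ))
    (u w : Fin t → ℝ) :
    Matrix (Fin s ⊕ {k : Fin t // u k = 0 ∧ w k = 0}) (Fin t) ℝ :=
  Matrix.of fun r c =>
    match r with
    | Sum.inl a => rows a c
    | Sum.inr k => if c = k.1 then 1 else 0

/-! The edge condition is a statement about the subspace `K` cut out by the `H_j` and by
`x_k = 0` for `k ∈ Z(u) ∩ Z(w)`: `[u, w]` is an edge of `P` iff `K = span {u, w}`. If `[u, w]`
is an edge, every direction of `K` can be followed a little way inside `P` from the midpoint of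
`[u, w]`, whose zero set is exactly `Z(u) ∩ Z(w)`, so it lies in `span {u, w}`. Conversely, two
points of `P` whose open segment meets `[u, w]` vanish on `Z(u) ∩ Z(w)`, hence lie in `K` and
on the line through the vertices `u` and `w`, whose trace on `P` is `[u, w]`. As `u, w ∈ K` are
independent (both have coordinate sum one), `K = span {u, w}` iff `dim K = 2`, and rank–nullity
turns this into `t = rank M + 2`. -/

open Filter Topology Submodule

section ExtremePoints

variable {𝕜 E : Type*} [Field 𝕜] [LinearOrder 𝕜] [IsStrictOrderedRing 𝕜] [AddCommGroup E]
  [Module 𝕜 E] {P : Set E} {u w : E} {a b : 𝕜}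

lemma nonneg_of_smul_add_smul_mem (hu : u ∈ P.extremePoints 𝕜) (hw : w ∈ P) (huw : u ≠ w)
    (hab : a + b = 1) (hx : a • u + b • w ∈ P) : 0 ≤ b := by
  by_contra! hb
  have ha : 0 < a := by linarith
  -- for `b < 0` the extreme point `u` lies strictly between `w` and `a • u + b • w`
  have hmem : u ∈ openSegment 𝕜 w (a • u + b • w) := by
    refine ⟨-b / a, 1 / a, div_pos (by linarith) ha, by positivity, ?_, ?_⟩
    · field_simp; linarith
    · match_scalars
      · ring
      · field_simp
  exact huw (hu.2 hw hx hmem).symm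

lemma smul_add_smul_mem_segment (hu : u ∈ P.extremePoints 𝕜) (hw : w ∈ P.extremePoints 𝕜)
    (huw : u ≠ w) (hab : a + b = 1) (hx : a • u + b • w ∈ P) :
    a • u + b • w ∈ segment 𝕜 u w :=
  ⟨a, b, nonneg_of_smul_add_smul_mem hw hu.1 huw.symm (by linarith) (by rwa [add_comm]),
    nonneg_of_smul_add_smul_mem hu hw.1 huw hab hx, hab, rfl⟩

lemma IsExtreme.add_mem_of_sub_mem {A B : Set E} (h : IsExtreme 𝕜 A B) {z d : E} (hz : z ∈ B)
    (h₁ : z + d ∈ A) (h₂ : z - d ∈ A) : z + d ∈ B :=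
  h.left_mem_of_mem_openSegment h₁ h₂ hz
    ⟨1 / 2, 1 / 2, by norm_num, by norm_num, by norm_num, by module⟩

end ExtremePoints

lemma linearIndependent_pair_of_apply_eq_one {K M : Type*} [Field K] [AddCommGroup M]
    [Module K M] (f : M →ₗ[K] K) {u w : M} (hu : f u = 1) (hw : f w = 1) (huw : u ≠ w) :
    LinearIndependent K ![u, w] := by
  rw [LinearIndependent.pair_iff]
  intro a b hab
  have hba : b = -a := by
    have h := congrArg f hab
    simp only [map_add, map_smul, hu, hw, smul_eq_mul, mul_one, map_zero] at h
    linear_combination h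
  subst hba
  have : a • (u - w) = 0 := by rw [← hab]; module
  have ha : a = 0 := (smul_eq_zero.1 this).resolve_right (sub_ne_zero.2 huw)
  simp [ha]

lemma LinearIndependent.finrank_span_pair {K M : Type*} [Field K] [AddCommGroup M] [Module K M]
    {u w : M} (h : LinearIndependent K ![u, w]) : Module.finrank K (span K {u, w}) = 2 := by
  rw [← Matrix.range_cons_cons_empty u w ![], finrank_span_eq_card h, Fintype.card_fin]

lemma Matrix.rank_add_finrank_ker_mulVecLin {m n K : Type*} [Fintype n] [Field K]
    (A : Matrix m n K) : A.rank + Module.finrank K (LinearMap.ker A.mulVecLin) = Fintype.card n := by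
  rw [Matrix.rank, LinearMap.finrank_range_add_finrank_ker, Module.finrank_fintype_fun_eq_card]

lemma exists_pos_mul_abs_le {ι : Type*} [Finite ι] {z v : ι → ℝ} (hz : 0 ≤ z)
    (hv : ∀ k, z k = 0 → v k = 0) : ∃ ε > 0, ∀ k, ε * |v k| ≤ z k := by
  have h : ∀ k, ∀ᶠ ε in 𝓝 (0 : ℝ), ε * |v k| ≤ z k := by
    intro k
    rcases (hz k).eq_or_lt with hzk | hzk
    · simp [hv k hzk.symm, ← hzk]
    · have : Tendsto (fun ε : ℝ => ε * |v k|) (𝓝 0) (𝓝 0) := by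
        simpa using (tendsto_id (x := 𝓝 (0 : ℝ))).mul_const |v k|
      exact this.eventually (eventually_le_nhds hzk)
  obtain ⟨ε, hε, hεpos⟩ :=
    ((eventually_all.2 h).filter_mono nhdsWithin_le_nhds |>.and
      (self_mem_nhdsWithin (s := Set.Ioi (0 : ℝ)))).exists
  exact ⟨ε, hεpos, hε⟩

section FeasibleSet

variable {ι σ : Type*} [Fintype ι] (rows : σ → ι → ℝ)

def feasibleSet : Set (ι → ℝ) :=
  {x | (∀ j, 0 ≤ x j) ∧ (∑ j, x j) = 1 ∧ ∀ r, rows r ⬝ᵥ x = 0}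

lemma convex_feasibleSet : Convex ℝ (feasibleSet rows) := by
  rintro x ⟨hx0, hx1, hxr⟩ y ⟨hy0, hy1, hyr⟩ a b ha hb hab
  refine ⟨fun j => ?_, ?_, fun r => ?_⟩
  · have := hx0 j; have := hy0 j
    simp only [Pi.add_apply, Pi.smul_apply, smul_eq_mul]; positivity
  · simp [Finset.sum_add_distrib, ← Finset.mul_sum, hx1, hy1, hab]
  · simp [dotProduct_add, dotProduct_smul, hxr r, hyr r]

variable {rows}

lemma add_smul_mem_feasibleSet {z d : ι → ℝ} {ε c : ℝ} (hz : z ∈ feasibleSet rows)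
    (hd1 : ∑ j, d j = 0) (hdr : ∀ r, rows r ⬝ᵥ d = 0) (hε : ∀ k, ε * |d k| ≤ z k)
    (hc : |c| ≤ ε) : z + c • d ∈ feasibleSet rows := by
  obtain ⟨hz0, hz1, hzr⟩ := hz
  refine ⟨fun j => ?_, ?_, fun r => ?_⟩
  · have : |c * d j| ≤ z j := by
      rw [abs_mul]; exact (mul_le_mul_of_nonneg_right hc (abs_nonneg _)).trans (hε j)
    simp only [Pi.add_apply, Pi.smul_apply, smul_eq_mul]
    linarith [neg_abs_le (c * d j)]
  · simp [Finset.sum_add_distrib, ← Finset.mul_sum, hz1, hd1]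
  · simp [dotProduct_add, dotProduct_smul, hzr r, hdr r]

variable {u w : ι → ℝ}

lemma mem_span_of_isExtreme_segment (hu : u ∈ feasibleSet rows) (hw : w ∈ feasibleSet rows)
    (hext : IsExtreme ℝ (feasibleSet rows) (segment ℝ u w)) {v : ι → ℝ}
    (hvr : ∀ r, rows r ⬝ᵥ v = 0) (hvZ : ∀ k, u k = 0 → w k = 0 → v k = 0) :
    v ∈ span ℝ {u, w} := by
  set z : ι → ℝ := (1 / 2 : ℝ) • u + (1 / 2 : ℝ) • w
  have hzseg : z ∈ segment ℝ u w := ⟨1 / 2, 1 / 2, by norm_num, by norm_num, by norm_num, rfl⟩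
  have hzP : z ∈ feasibleSet rows := hext.subset hzseg
  have hzspan : z ∈ span ℝ {u, w} := mem_span_pair.2 ⟨1 / 2, 1 / 2, rfl⟩
  set d := v - (∑ j, v j) • z
  suffices d ∈ span ℝ {u, w} by
    simpa [d] using add_mem this (smul_mem _ (∑ j, v j) hzspan)
  have hd1 : ∑ j, d j = 0 := by
    simp [d, Finset.sum_sub_distrib, ← Finset.mul_sum, hzP.2.1]
  have hdr : ∀ r, rows r ⬝ᵥ d = 0 := by
    simp [d, dotProduct_sub, dotProduct_smul, hvr, hzP.2.2]
  have hdZ : ∀ k, z k = 0 → d k = 0 := by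
    intro k hk
    have huk := hu.1 k
    have hwk := hw.1 k
    have hsum : 1 / 2 * u k + 1 / 2 * w k = 0 := by simpa [z] using hk
    simp [d, hk, hvZ k (by linarith) (by linarith)]
  -- the support of the midpoint `z` is the complement of `Z(u) ∩ Z(w)`, so `P` contains a
  -- small segment through `z` in direction `d`, which extremality puts inside `[u, w]`
  obtain ⟨ε, hε, hεd⟩ := exists_pos_mul_abs_le (fun k => hzP.1 k) hdZ
  have hplus := add_smul_mem_feasibleSet hzP hd1 hdr hεd (c := ε) (abs_of_pos hε).le
  have hminus := add_smul_mem_feasibleSet hzP hd1 hdr hεd (c := -ε) (by simp [abs_of_pos hε])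
  rw [neg_smul, ← sub_eq_add_neg] at hminus
  obtain ⟨a, b, -, -, -, hab⟩ := hext.add_mem_of_sub_mem hzseg hplus hminus
  have : ε • d ∈ span ℝ {u, w} := by
    simpa using sub_mem (mem_span_pair.2 ⟨a, b, hab⟩) hzspan
  exact (smul_mem_iff _ hε.ne').1 this

lemma isExtreme_segment_of_forall_mem_span (hu : u ∈ (feasibleSet rows).extremePoints ℝ)
    (hw : w ∈ (feasibleSet rows).extremePoints ℝ) (huw : u ≠ w)
    (h : ∀ v : ι → ℝ, (∀ r, rows r ⬝ᵥ v = 0) → (∀ k, u k = 0 → w k = 0 → v k = 0) →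
      v ∈ span ℝ {u, w}) :
    IsExtreme ℝ (feasibleSet rows) (segment ℝ u w) := by
  refine ⟨(convex_feasibleSet rows).segment_subset hu.1 hw.1, ?_⟩
  rintro x hx y hy z ⟨a, b, ha, hb, -, rfl⟩ ⟨p, q, hp, hq, -, hxyz⟩
  have hxZ : ∀ k, u k = 0 → w k = 0 → x k = 0 := by
    intro k huk hwk
    have := congrFun hxyz k
    simp only [Pi.add_apply, Pi.smul_apply, smul_eq_mul, huk, hwk, mul_zero, add_zero] at this
    nlinarith [hx.1 k, hy.1 k]
  obtain ⟨α, β, rfl⟩ := mem_span_pair.1 (h x hx.2.2 hxZ)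
  have hαβ : α + β = 1 := by
    simpa [Finset.sum_add_distrib, ← Finset.mul_sum, hu.1.2.1, hw.1.2.1] using hx.2.1
  exact smul_add_smul_mem_segment hu hw huw hαβ hx

lemma isExtreme_segment_iff (hu : u ∈ (feasibleSet rows).extremePoints ℝ)
    (hw : w ∈ (feasibleSet rows).extremePoints ℝ) (huw : u ≠ w) :
    IsExtreme ℝ (feasibleSet rows) (segment ℝ u w) ↔
      ∀ v : ι → ℝ, (∀ r, rows r ⬝ᵥ v = 0) → (∀ k, u k = 0 → w k = 0 → v k = 0) →
        v ∈ span ℝ {u, w} :=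
  ⟨fun h _ => mem_span_of_isExtreme_segment hu.1 hw.1 h,
    isExtreme_segment_of_forall_mem_span hu hw huw⟩

end FeasibleSet

lemma mem_ker_adjacencyTestMatrix_iff {s t : ℕ} {rows : Fin s → Fin t → ℝ} {u w v : Fin t → ℝ} :
    v ∈ LinearMap.ker (adjacencyTestMatrix rows u w).mulVecLin ↔
      (∀ r, rows r ⬝ᵥ v = 0) ∧ ∀ k, u k = 0 → w k = 0 → v k = 0 := by
  simp [funext_iff, mulVec, adjacencyTestMatrix, dotProduct, ite_mul]

/-- Fukuda–Prodon adjacency criterion: two distinct vertex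
solutions `u`, `w` of the polytope
`P = O ∩ J ∩ H₁ ∩ ⋯ ∩ H_{i-1}` are adjacent (the segment `[u, w]` is an extreme
subset, i.e. an edge, of `P`) iff the intersection of `H₁ ∩ ⋯ ∩ H_{i-1}` with the
coordinate subspace `{x : x_k = 0 for all k ∈ Z(u) ∩ Z(w)}` — the kernel of the
stacked matrix `M` — has dimension two; equivalently `t - rank(M) = 2`. -/
theorem fukuda_prodon_adjacency
    (s t : ℕ) (rows : Fin s → (Fin t → ℝ))
    (P : Set (Fin t → ℝ))
    (hP : P = {x | (∀ j, 0 ≤ x j) ∧ (∑ j, x j) = 1 ∧ ∀ r, rows r ⬝ᵥ x = 0})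
    (u w : Fin t → ℝ)
    (hu : u ∈ Set.extremePoints ℝ P) (hw : w ∈ Set.extremePoints ℝ P)
    (huw : u ≠ w) :
    (IsExtreme ℝ P (segment ℝ u w) ↔
      Module.finrank ℝ
        (LinearMap.ker (adjacencyTestMatrix rows u w).mulVecLin) = 2) ∧
    (Module.finrank ℝ
        (LinearMap.ker (adjacencyTestMatrix rows u w).mulVecLin) = 2 ↔
      t = (adjacencyTestMatrix rows u w).rank + 2) := by
  change P = feasibleSet rows at hP
  subst hP
  set K := LinearMap.ker (adjacencyTestMatrix rows u w).mulVecLin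
  have hspan_le : span ℝ {u, w} ≤ K := by
    rw [span_le, Set.insert_subset_iff, Set.singleton_subset_iff]
    exact ⟨mem_ker_adjacencyTestMatrix_iff.2 ⟨hu.1.2.2, fun _ h _ => h⟩,
      mem_ker_adjacencyTestMatrix_iff.2 ⟨hw.1.2.2, fun _ _ h => h⟩⟩
  have hspan : Module.finrank ℝ (span ℝ {u, w}) = 2 :=
    (linearIndependent_pair_of_apply_eq_one (∑ j, LinearMap.proj j)
      (by simpa using hu.1.2.1) (by simpa using hw.1.2.1) huw).finrank_span_pair
  have hdim : Module.finrank ℝ K = 2 ↔ K ≤ span ℝ {u, w} :=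
    ⟨fun h => (eq_of_le_of_finrank_eq hspan_le (by rw [hspan, h])).ge,
      fun h => by rw [le_antisymm h hspan_le, hspan]⟩
  refine ⟨?_, ?_⟩
  · rw [isExtreme_segment_iff hu hw huw, hdim, SetLike.le_def]
    simp only [K, mem_ker_adjacencyTestMatrix_iff, and_imp]
  · have := (adjacencyTestMatrix rows u w).rank_add_finrank_ker_mulVecLin
    rw [Fintype.card_fin] at this
    change _ + Module.finrank ℝ K = t at this
    omega
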